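/- Fix a step t, fix real coefficients α_1,…,α_{t−1} with Z_t > 0, and assume 0 < R̃_t < 1. If α_t = (1/2)·ln((1 − R̃_t)/R̃_t) is the optimal t-th coefficient, then the next normalization factor satisfies Z_{t+1} = 2·e^{−α_t}·(1 − R̃_t)·Z_t = 2·√(R̃_t·(1 − R̃_t))·Z_t. -/

import Mathlib

open Finset

noncomputable section

/-- The sign factor `(-1)^s` of a bit, where `s = true` encodes the bit `1`
(meaning the classifier errs on the input). -/
def sgn (s : Bool) : ℝ := if s then -1 else 1

/-- The joint probability `q(s_k, x) = p(x) · ∏_{i=1}^k q_i(s_i | x)` of drawing the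
input `x` and the classifiers `1, …, k` producing the error-indicator string `s`. -/
def jointProb {Ω : Type*} (p : Ω → ℝ) (q : ℕ → Ω → Bool → ℝ) (k : ℕ)
    (x : Ω) (s : Fin k → Bool) : ℝ :=
  p x * ∏ i : Fin k, q i x (s i)

/-- The (unnormalized) weight `w^x_{s_k} = ∏_{i=1}^k exp(-α_i · (-1)^{s_i})` of a branch. -/
def wgt {k : ℕ} (α : Fin k → ℝ) (s : Fin k → Bool) : ℝ :=
  ∏ i : Fin k, Real.exp (-(α i) * sgn (s i))

/-- The exponential cost `C_k(α₁, …, α_k) = ∑_{x, s_k} q(s_k, x) ∏_i exp(-α_i (-1)^{s_i})`. -/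
def cost {Ω : Type*} [Fintype Ω] (p : Ω → ℝ) (q : ℕ → Ω → Bool → ℝ) (k : ℕ)
    (α : Fin k → ℝ) : ℝ :=
  ∑ x : Ω, ∑ s : Fin k → Bool, jointProb p q k x s * wgt α s

/-- The normalization factor `Z_{k+1} = ∑_{x, s_k} q(s_k, x) · w^x_{s_k}`
(so that `Z_1 = ∑_x p x = 1` for the empty string). -/
def Znorm {Ω : Type*} [Fintype Ω] (p : Ω → ℝ) (q : ℕ → Ω → Bool → ℝ) (k : ℕ)
    (α : Fin k → ℝ) : ℝ :=
  ∑ x : Ω, ∑ s : Fin k → Bool, jointProb p q k x s * wgt α s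

/-- The weighted error `R̃_{k+1}` of the `(k+1)`-st classifier (0-indexed: classifier `q k`),
given the coefficients `α₁, …, α_k` of the previous classifiers. -/
def Rerr {Ω : Type*} [Fintype Ω] (p : Ω → ℝ) (q : ℕ → Ω → Bool → ℝ) (k : ℕ)
    (α : Fin k → ℝ) : ℝ :=
  (∑ x : Ω, ∑ s : Fin k → Bool, jointProb p q k x s * wgt α s * q k x true) /
    Znorm p q k α

/-! Splitting off the last bit of the error string gives the recursion
`Z_{t+1} = (e^{α_t} R̃_t + e^{-α_t} (1 - R̃_t)) Z_t`. The optimal `α_t` makes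
`e^{2 α_t} = (1 - R̃_t) / R̃_t`, so both summands equal `√(R̃_t (1 - R̃_t)) Z_t`. -/

lemma sum_pi_fin_succ_eq_sum_snoc {β M : Type*} [Fintype β] [AddCommMonoid M] {k : ℕ}
    (F : (Fin (k + 1) → β) → M) :
    ∑ s : Fin (k + 1) → β, F s = ∑ b : β, ∑ s : Fin k → β, F (Fin.snoc s b) := by
  rw [← Equiv.sum_comp (Fin.snocEquiv fun _ => β) F, Fintype.sum_prod_type]
  rfl

lemma jointProb_snoc {Ω : Type*} (p : Ω → ℝ) (q : ℕ → Ω → Bool → ℝ) (k : ℕ) (x : Ω)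
    (s : Fin k → Bool) (b : Bool) :
    jointProb p q (k + 1) x (Fin.snoc s b) = jointProb p q k x s * q k x b := by
  simp only [jointProb, Fin.prod_univ_castSucc, Fin.snoc_castSucc, Fin.snoc_last,
    Fin.val_castSucc, Fin.val_last, mul_assoc]

lemma wgt_snoc {k : ℕ} (α : Fin k → ℝ) (a : ℝ) (s : Fin k → Bool) (b : Bool) :
    wgt (Fin.snoc α a) (Fin.snoc s b) = wgt α s * Real.exp (-a * sgn b) := by
  simp only [wgt, Fin.prod_univ_castSucc, Fin.snoc_castSucc, Fin.snoc_last]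

lemma Znorm_snoc {Ω : Type*} [Fintype Ω] (p : Ω → ℝ) (q : ℕ → Ω → Bool → ℝ) (k : ℕ)
    (hq : ∀ x, q k x false + q k x true = 1) (α : Fin k → ℝ) (hZ : Znorm p q k α ≠ 0)
    (a : ℝ) :
    Znorm p q (k + 1) (Fin.snoc α a) =
      (Real.exp a * Rerr p q k α + Real.exp (-a) * (1 - Rerr p q k α)) * Znorm p q k α := by
  have hErr : Rerr p q k α * Znorm p q k α =
      ∑ x : Ω, ∑ s : Fin k → Bool, jointProb p q k x s * wgt α s * q k x true :=
    div_mul_cancel₀ _ hZ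
  rw [add_mul, mul_assoc, mul_assoc, sub_mul, one_mul, hErr]
  simp only [Znorm, sum_pi_fin_succ_eq_sum_snoc, Fintype.sum_bool, ← Finset.sum_add_distrib,
    Finset.mul_sum, ← Finset.sum_sub_distrib]
  refine Finset.sum_congr rfl fun x _ => Finset.sum_congr rfl fun s _ => ?_
  simp only [jointProb_snoc, wgt_snoc, sgn, if_true, Bool.false_eq_true, if_false,
    eq_sub_of_add_eq (hq x)]
  ring_nf

lemma exp_half_log_div_mul {u v : ℝ} (hu : 0 < u) (hv : 0 < v) :
    Real.exp (1 / 2 * Real.log (u / v)) * v = √(u * v) := by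
  rw [mul_comm (1 / 2), ← Real.rpow_def_of_pos (div_pos hu hv), ← Real.sqrt_eq_rpow,
    show u * v = u / v * (v * v) by field_simp, Real.sqrt_mul (div_pos hu hv).le,
    Real.sqrt_mul_self hv.le]

lemma exp_neg_half_log_div_mul {u v : ℝ} (hu : 0 < u) (hv : 0 < v) :
    Real.exp (-(1 / 2 * Real.log (u / v))) * u = √(v * u) := by
  rw [← mul_neg, ← Real.log_inv, inv_div, exp_half_log_div_mul hv hu]

theorem adaboost_next_normalization_general
    {Ω : Type*} [Fintype Ω] (p : Ω → ℝ) (q : ℕ → Ω → Bool → ℝ) (T k : ℕ)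
    (ht : k + 1 ≤ T)
    (hq : ∀ i < T, ∀ x : Ω, (0 ≤ q i x false ∧ q i x false ≤ 1) ∧
      (0 ≤ q i x true ∧ q i x true ≤ 1) ∧ q i x false + q i x true = 1)
    (α : Fin k → ℝ)
    (hZ : 0 < Znorm p q k α)
    (R : ℝ) (hR : R = Rerr p q k α) (hR0 : 0 < R) (hR1 : R < 1)
    (a : ℝ) (ha : a = (1 / 2) * Real.log ((1 - R) / R)) :
    Znorm p q (k + 1) (Fin.snoc α a) = 2 * Real.exp (-a) * (1 - R) * Znorm p q k α ∧
    Znorm p q (k + 1) (Fin.snoc α a) = 2 * Real.sqrt (R * (1 - R)) * Znorm p q k α := by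
  have h1R : 0 < 1 - R := sub_pos.mpr hR1
  have hsplit := Znorm_snoc p q k (fun x => (hq k ht x).2.2) α hZ.ne' a
  have herr : Real.exp a * R = √(R * (1 - R)) := by
    rw [ha, exp_half_log_div_mul h1R hR0, mul_comm]
  have hcorrect : Real.exp (-a) * (1 - R) = √(R * (1 - R)) := by
    rw [ha, exp_neg_half_log_div_mul h1R hR0]
  rw [← hR, herr, hcorrect] at hsplit
  constructor
  · rw [hsplit, ← hcorrect]
    ring
  · rw [hsplit]
    ring

/-- Fix a step `t = k+1` and coefficients `α₁, …, α_k` with `Z_{k+1} > 0`,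
and assume `0 < R̃_{k+1} < 1`. If `a = (1/2)·ln((1 - R̃_{k+1})/R̃_{k+1})` is the optimal
`(k+1)`-st coefficient, then the next normalization factor satisfies
`Z_{k+2} = 2·e^{-a}·(1 - R̃_{k+1})·Z_{k+1} = 2·√(R̃_{k+1}(1 - R̃_{k+1}))·Z_{k+1}`. -/
theorem adaboost_next_normalization
    {Ω : Type*} [Fintype Ω] (p : Ω → ℝ) (q : ℕ → Ω → Bool → ℝ) (T k : ℕ)
    (ht : k + 1 ≤ T)
    (hp : ∀ x : Ω, 0 ≤ p x ∧ p x ≤ 1) (hpsum : ∑ x : Ω, p x = 1)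
    (hq : ∀ i < T, ∀ x : Ω, (0 ≤ q i x false ∧ q i x false ≤ 1) ∧
      (0 ≤ q i x true ∧ q i x true ≤ 1) ∧ q i x false + q i x true = 1)
    (α : Fin k → ℝ)
    (hZ : 0 < Znorm p q k α)
    (R : ℝ) (hR : R = Rerr p q k α) (hR0 : 0 < R) (hR1 : R < 1)
    (a : ℝ) (ha : a = (1 / 2) * Real.log ((1 - R) / R)) :
    Znorm p q (k + 1) (Fin.snoc α a) = 2 * Real.exp (-a) * (1 - R) * Znorm p q k α ∧
    Znorm p q (k + 1) (Fin.snoc α a) = 2 * Real.sqrt (R * (1 - R)) * Znorm p q k α :=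
  adaboost_next_normalization_general p q T k ht hq α hZ R hR hR0 hR1 a ha
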